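/- Let p be a prime and s ≥ 1 an integer, and let F ∈ F_p[[x,y]] be the Honda formal group law of height s. Then the p-series of F satisfies [p]_F(x) = x^{p^s} in F_p[[x]]. -/

import Mathlib

open MvPowerSeries Finsupp
open scoped Classical

/-- Substitution of a multivariate power series (with zero constant term)
into a one-variable power series. -/
noncomputable def substPS {σ R : Type*} [CommRing R]
    (g : MvPowerSeries σ R) (f : PowerSeries R) : MvPowerSeries σ R :=
  fun d => ∑ n ∈ Finset.range (d.sum (fun _ k => k) + 1),
    PowerSeries.coeff n f * MvPowerSeries.coeff d (g ^ n)

/-- Substitution of a pair of power series (with zero constant terms) into a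
two-variable power series `F`, i.e. `F(a, b)`. -/
noncomputable def subst2 {σ R : Type*} [CommRing R]
    (a b : MvPowerSeries σ R) (F : MvPowerSeries (Fin 2) R) : MvPowerSeries σ R :=
  fun d => ∑ i ∈ Finset.range (d.sum (fun _ k => k) + 1),
    ∑ j ∈ Finset.range (d.sum (fun _ k => k) + 1),
      MvPowerSeries.coeff (Finsupp.single (0 : Fin 2) i + Finsupp.single 1 j) F *
        MvPowerSeries.coeff d (a ^ i * b ^ j)

/-- The Honda logarithm `l(x) = Σ_{i ≥ 0} p^{-i} x^{p^{s i}}` over `ℚ_p`. -/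
noncomputable def hondaLog (p s : ℕ) [Fact p.Prime] : PowerSeries ℚ_[p] :=
  PowerSeries.mk fun n =>
    if h : ∃ i, n = p ^ (s * i) then (p : ℚ_[p]) ^ (-(Nat.find h : ℤ)) else 0

/-- `F ∈ 𝔽_p[[x,y]]` is the Honda formal group law of height `s`:  it is the coefficientwise
mod `p` reduction of the (unique) power series `F₀` with coefficients in `ℤ_p` and zero
constant term satisfying `l(F₀(x,y)) = l(x) + l(y)` over `ℚ_p`, where `l` is the Honda
logarithm `l(x) = Σ_{i ≥ 0} p^{-i} x^{p^{s i}}`. -/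
def IsHondaFGL (p : ℕ) [Fact p.Prime] (s : ℕ) (F : MvPowerSeries (Fin 2) (ZMod p)) : Prop :=
  ∃ F₀ : MvPowerSeries (Fin 2) ℤ_[p],
    MvPowerSeries.constantCoeff F₀ = 0 ∧
    substPS (MvPowerSeries.map (PadicInt.Coe.ringHom (p := p)) F₀) (hondaLog p s) =
      substPS (MvPowerSeries.X 0) (hondaLog p s) + substPS (MvPowerSeries.X 1) (hondaLog p s) ∧
    F = MvPowerSeries.map (PadicInt.toZMod (p := p)) F₀

/-- The `k`-series `[k]_F` of a two-variable power series `F`: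
`[1]_F(x) = x` and `[k+1]_F(x) = F([k]_F(x), x)`. -/
noncomputable def kSeries {p : ℕ} (F : MvPowerSeries (Fin 2) (ZMod p)) :
    ℕ → PowerSeries (ZMod p)
  | 0 => 0
  | 1 => PowerSeries.X
  | (k + 2) => subst2 (kSeries F (k + 1)) PowerSeries.X F

/-!
Over `ℚ_p` the Honda logarithm `l` turns `F₀` into addition, so `l([p](x)) = p l(x)`, while the
shape of `l` gives `l(x^{p^s}) = p (l(x) - x)`. Hence `a = [p]_{F₀}(x)` and `b = x^{p^s}` in
`ℤ_p⟦x⟧` satisfy `l(a) - l(b) = p x`. Suppose `a ≡ b mod p` in degrees below `n`. Then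
`p^{j+1}` divides the degree-`n` coefficient of `a^{p^j} - b^{p^j}`, which outweighs the
denominator `p^i` of the term `p^{-i} x^{p^{si}}` of `l`. So in degree `n` every term of
`l(a) - l(b) - p x` except `a - b` itself lies in `p ℤ_p`, hence so does the coefficient of
`a - b`. Reducing mod `p` gives the theorem.
-/

section Substitution

variable {σ R : Type*} [CommRing R]

theorem coeff_mul_pow_eq_zero_of_degree_lt {a b : MvPowerSeries σ R}
    (ha : constantCoeff a = 0) (hb : constantCoeff b = 0) {d : σ →₀ ℕ} {i j : ℕ}
    (h : d.degree < i + j) : coeff d (a ^ i * b ^ j) = 0 := by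
  refine coeff_of_lt_order (lt_of_lt_of_le (Nat.cast_lt.2 h) ?_)
  calc ((i + j : ℕ) : ℕ∞) = i + j := by push_cast; rfl
    _ ≤ (a ^ i).order + (b ^ j).order :=
      add_le_add (le_order_pow_of_constantCoeff_eq_zero i ha)
        (le_order_pow_of_constantCoeff_eq_zero j hb)
    _ ≤ _ := le_order_mul

theorem coeff_pow_eq_zero_of_degree_lt {a : MvPowerSeries σ R}
    (ha : constantCoeff a = 0) {d : σ →₀ ℕ} {i : ℕ} (h : d.degree < i) :
    coeff d (a ^ i) = 0 := by
  simpa using coeff_mul_pow_eq_zero_of_degree_lt ha ha (j := 0) (by simpa using h)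

theorem hasSubst_pair {a b : MvPowerSeries σ R} (ha : constantCoeff a = 0)
    (hb : constantCoeff b = 0) : HasSubst ![a, b] :=
  hasSubst_of_constantCoeff_zero fun i => by fin_cases i <;> assumption

theorem substPS_eq_subst {g : MvPowerSeries σ R} (hg : constantCoeff g = 0)
    (f : PowerSeries R) : substPS g f = f.subst g := by
  ext d
  rw [PowerSeries.coeff_subst (PowerSeries.HasSubst.of_constantCoeff_zero hg),
    finsum_eq_sum_of_support_subset _ (s := Finset.range (d.degree + 1))]
  · rfl
  · intro m hm
    by_contra hmd
    simp only [Finset.coe_range, Set.mem_Iio, not_lt] at hmd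
    exact hm (by simp only [coeff_pow_eq_zero_of_degree_lt hg (by omega : d.degree < m),
      smul_zero])

theorem subst2_eq_subst {a b : MvPowerSeries σ R} (ha : constantCoeff a = 0)
    (hb : constantCoeff b = 0) (F : MvPowerSeries (Fin 2) R) :
    subst2 a b F = F.subst ![a, b] := by
  ext d
  set N := d.degree + 1
  let pair : ℕ × ℕ → Fin 2 →₀ ℕ := fun ij => Finsupp.single 0 ij.1 + Finsupp.single 1 ij.2
  have hpair : Function.Injective pair := fun ij ij' h =>
    Prod.ext (by simpa [pair] using DFunLike.congr_fun h 0)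
      (by simpa [pair] using DFunLike.congr_fun h 1)
  rw [coeff_subst (hasSubst_pair ha hb), finsum_eq_sum_of_support_subset _
    (s := (Finset.range N ×ˢ Finset.range N).image pair), Finset.sum_image
    (fun _ _ _ _ h => hpair h), Finset.sum_product]
  · simp only [Finsupp.prod_pow, Fin.prod_univ_two, smul_eq_mul, pair, Finsupp.coe_add,
      Pi.add_apply, Finsupp.single_eq_same, Finsupp.single_eq_of_ne, ne_eq, zero_ne_one,
      one_ne_zero, not_false_eq_true, add_zero, zero_add, Matrix.cons_val_zero,
      Matrix.cons_val_one, Matrix.cons_val_fin_one]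
    rfl
  · intro e he
    by_contra hT
    refine he ?_
    simp only [Finsupp.prod_pow, Fin.prod_univ_two, Matrix.cons_val_zero, Matrix.cons_val_one,
      Matrix.cons_val_fin_one, smul_eq_mul]
    rw [coeff_mul_pow_eq_zero_of_degree_lt ha hb, mul_zero]
    simp only [Finset.coe_image, Finset.coe_product, Finset.coe_range, Set.mem_image,
      Set.mem_prod, Set.mem_Iio, not_exists, not_and, Prod.forall] at hT
    by_contra hle
    exact hT (e 0) (e 1) ⟨by omega, by omega⟩ (by ext i; fin_cases i <;> simp [pair])

theorem PowerSeries.coeff_subst_eq_sum {a : PowerSeries R} (ha : constantCoeff a = 0)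
    (f : PowerSeries R) (n : ℕ) :
    coeff n (f.subst a) = ∑ m ∈ Finset.range (n + 1), coeff m f * coeff n (a ^ m) := by
  rw [← substPS_eq_subst ha]
  show ∑ m ∈ Finset.range ((Finsupp.single () n).degree + 1), _ = _
  rw [Finsupp.degree_single]
  rfl

theorem PowerSeries.subst_comp_subst_pair {a b : MvPowerSeries σ R}
    (ha : MvPowerSeries.constantCoeff a = 0) (hb : MvPowerSeries.constantCoeff b = 0)
    {G : MvPowerSeries (Fin 2) R} (hG : MvPowerSeries.constantCoeff G = 0) (f : PowerSeries R) :
    (f.subst G).subst ![a, b] = f.subst (G.subst ![a, b]) :=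
  MvPowerSeries.subst_comp_subst_apply (PowerSeries.HasSubst.of_constantCoeff_zero hG).const
    (hasSubst_pair ha hb) f

end Substitution

section NSeries

variable {R S : Type*} [CommRing R] [CommRing S]

/-- `kSeries` over an arbitrary commutative ring, written with Mathlib's substitution. -/
noncomputable def nSeries (F : MvPowerSeries (Fin 2) R) : ℕ → PowerSeries R
  | 0 => 0
  | 1 => PowerSeries.X
  | (k + 2) => F.subst ![nSeries F (k + 1), PowerSeries.X]

variable {F : MvPowerSeries (Fin 2) R}

theorem constantCoeff_nSeries (hF : constantCoeff F = 0) :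
    ∀ k, PowerSeries.constantCoeff (nSeries F k) = 0
  | 0 => map_zero _
  | 1 => PowerSeries.constantCoeff_X
  | (k + 2) => constantCoeff_subst_eq_zero
      (hasSubst_pair (constantCoeff_nSeries hF (k + 1)) PowerSeries.constantCoeff_X)
      (fun i => by
        fin_cases i
        exacts [constantCoeff_nSeries hF (k + 1), PowerSeries.constantCoeff_X]) hF

theorem kSeries_eq_nSeries {p : ℕ} {F : MvPowerSeries (Fin 2) (ZMod p)}
    (hF : constantCoeff F = 0) : ∀ k, kSeries F k = nSeries F k
  | 0 => rfl
  | 1 => rfl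
  | (k + 2) => by
    rw [kSeries, nSeries, kSeries_eq_nSeries hF (k + 1),
      subst2_eq_subst (constantCoeff_nSeries hF (k + 1)) PowerSeries.constantCoeff_X]

theorem map_nSeries (φ : R →+* S) (hF : constantCoeff F = 0) :
    ∀ k, PowerSeries.map φ (nSeries F k) = nSeries (MvPowerSeries.map φ F) k
  | 0 => map_zero _
  | 1 => PowerSeries.map_X φ
  | (k + 2) => by
    rw [nSeries, nSeries, ← map_nSeries φ hF (k + 1)]
    refine (MvPowerSeries.map_subst (hasSubst_pair (constantCoeff_nSeries hF (k + 1))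
      PowerSeries.constantCoeff_X) F).trans ?_
    congr 1
    funext i
    fin_cases i
    · rfl
    · exact PowerSeries.map_X φ

theorem subst_nSeries_eq_nsmul {f : PowerSeries R} (hF : constantCoeff F = 0)
    (hf : f.subst F = f.subst (X 0 : MvPowerSeries (Fin 2) R) + f.subst (X 1)) (k : ℕ) :
    f.subst (nSeries F (k + 1)) = (k + 1) • f := by
  induction k with
  | zero => simp [nSeries]
  | succ k ih =>
    have hk := constantCoeff_nSeries hF (k + 1)
    have hX := PowerSeries.constantCoeff_X (R := R)
    have := congrArg (MvPowerSeries.subst ![nSeries F (k + 1), PowerSeries.X]) hf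
    rw [subst_add (hasSubst_pair hk hX), PowerSeries.subst_comp_subst_pair hk hX hF,
      PowerSeries.subst_comp_subst_pair hk hX (constantCoeff_X 0),
      PowerSeries.subst_comp_subst_pair hk hX (constantCoeff_X 1),
      subst_X (hasSubst_pair hk hX), subst_X (hasSubst_pair hk hX)] at this
    simp only [Matrix.cons_val_zero, Matrix.cons_val_one, Matrix.cons_val_fin_one,
      PowerSeries.X_subst] at this
    rw [nSeries, this, ih, succ_nsmul _ (k + 1)]

end NSeries

namespace PowerSeries

variable {R : Type*} [CommRing R]

theorem C_dvd_of_forall_dvd_coeff {r : R} {f : PowerSeries R}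
    (h : ∀ k, r ∣ coeff k f) : C r ∣ f :=
  ⟨mk fun k => (h k).choose, by ext k; rw [coeff_C_mul, coeff_mk, ← (h k).choose_spec]⟩

theorem pow_succ_dvd_pow_sub_pow {x a b : R} {n q : ℕ} (ha : x ∣ a) (hb : x ∣ b)
    (hab : x ^ n ∣ a - b) (hq : 2 ≤ q) : x ^ (n + 1) ∣ a ^ q - b ^ q := by
  rw [← geom_sum₂_mul, pow_succ']
  refine mul_dvd_mul (Finset.dvd_sum fun i hi => ?_) hab
  rcases Nat.eq_zero_or_pos i with rfl | hi
  · exact dvd_mul_of_dvd_right (dvd_pow hb (by omega)) _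
  · exact dvd_mul_of_dvd_left (dvd_pow ha hi.ne') _

theorem dvd_coeff_pow_sub_pow {p : ℕ} (hp : 2 ≤ p) {a b : PowerSeries R}
    (ha : constantCoeff a = 0) (hb : constantCoeff b = 0) {n : ℕ}
    (hlow : ∀ u < n, (p : R) ∣ coeff u (a - b)) {j : ℕ} (hj : j ≠ 0) :
    (p : R) ^ (j + 1) ∣ coeff n (a ^ p ^ j - b ^ p ^ j) := by
  -- `b + c` agrees with `a` below degree `n` and is congruent to `b` modulo `p`.
  set c : PowerSeries R := ↑(trunc n (a - b))
  have hcoeff_c (k : ℕ) : coeff k c = if k < n then coeff k (a - b) else 0 := by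
    rw [Polynomial.coeff_coe, coeff_trunc]
  have hpc : (p : PowerSeries R) ∣ c := by
    rw [← map_natCast C]
    refine C_dvd_of_forall_dvd_coeff fun k => ?_
    rw [hcoeff_c]
    split_ifs with hk
    exacts [hlow k hk, dvd_zero _]
  have hXc : X ∣ c := by
    rw [X_dvd_iff, ← coeff_zero_eq_constantCoeff_apply, hcoeff_c, map_sub,
      coeff_zero_eq_constantCoeff_apply, coeff_zero_eq_constantCoeff_apply, ha, hb, sub_zero,
      ite_self]
  have hXn : X ^ n ∣ a - (b + c) := X_pow_dvd_iff.2 fun m hm => by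
    rw [← sub_sub, map_sub, hcoeff_c, if_pos hm, sub_self]
  have hq : 2 ≤ p ^ j := hp.trans (Nat.le_self_pow hj p)
  have hlift : coeff n (a ^ p ^ j - (b + c) ^ p ^ j) = 0 :=
    X_pow_dvd_iff.1 (pow_succ_dvd_pow_sub_pow (X_dvd_iff.2 ha)
      (dvd_add (X_dvd_iff.2 hb) hXc) hXn hq) n (lt_add_one n)
  obtain ⟨g, hg⟩ :=
    dvd_sub_pow_of_dvd_sub (a := b + c) (b := b) (by rwa [add_sub_cancel_left]) j
  rw [← sub_add_sub_cancel _ ((b + c) ^ p ^ j), map_add, hlift, zero_add, hg,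
    ← map_natCast C, ← map_pow, coeff_C_mul]
  exact dvd_mul_right _ _

theorem map_toZMod_eq_of_forall_dvd_coeff_sub {p : ℕ} [Fact p.Prime]
    {a b : PowerSeries ℤ_[p]} (h : ∀ n, (p : ℤ_[p]) ∣ coeff n (a - b)) :
    map PadicInt.toZMod a = map PadicInt.toZMod b := by
  ext n
  obtain ⟨c, hc⟩ := h n
  rw [coeff_map, coeff_map, ← sub_eq_zero, ← map_sub, ← map_sub, hc, map_mul, map_natCast,
    ZMod.natCast_self, zero_mul]

end PowerSeries

section HondaLog

variable {p : ℕ} [hp : Fact p.Prime] {s : ℕ}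

theorem coeff_hondaLog_of_not_exists {n : ℕ} (hn : ¬∃ i, n = p ^ (s * i)) :
    PowerSeries.coeff n (hondaLog p s) = 0 := by
  rw [hondaLog, PowerSeries.coeff_mk, dif_neg hn]

theorem coeff_hondaLog_pow (hs : 1 ≤ s) (i : ℕ) :
    PowerSeries.coeff (p ^ (s * i)) (hondaLog p s) = (p : ℚ_[p]) ^ (-(i : ℤ)) := by
  have hex : ∃ j, p ^ (s * i) = p ^ (s * j) := ⟨i, rfl⟩
  rw [hondaLog, PowerSeries.coeff_mk, dif_pos hex, (Nat.find_eq_iff hex).2 ⟨rfl, ?_⟩]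
  intro j hj hij
  have := Nat.eq_of_mul_eq_mul_left hs (Nat.pow_right_injective hp.out.two_le hij)
  omega

theorem coeff_hondaLog_one : PowerSeries.coeff 1 (hondaLog p s) = 1 := by
  have hex : ∃ i, 1 = p ^ (s * i) := ⟨0, by simp⟩
  rw [hondaLog, PowerSeries.coeff_mk, dif_pos hex, (Nat.find_eq_zero hex).2 (by simp)]
  simp

theorem hondaLog_subst_X_pow (hs : 1 ≤ s) :
    (hondaLog p s).subst (PowerSeries.X ^ p ^ s : PowerSeries ℚ_[p]) =
      (p : ℚ_[p]) • (hondaLog p s - PowerSeries.X) := by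
  have hp0 : (p : ℚ_[p]) ≠ 0 := Nat.cast_ne_zero.2 hp.out.ne_zero
  have hps : 1 < p ^ s := Nat.one_lt_pow (by omega) hp.out.one_lt
  ext n
  rw [PowerSeries.coeff_subst_X_pow (by omega), PowerSeries.coeff_smul, map_sub,
    PowerSeries.coeff_X, Algebra.algebraMap_self, RingHom.id_apply, smul_eq_mul]
  by_cases hn : ∃ i, n = p ^ (s * i)
  · obtain ⟨i, rfl⟩ := hn
    cases i with
    | zero =>
      rw [mul_zero, pow_zero, if_neg (Nat.not_dvd_of_pos_of_lt one_pos hps),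
        coeff_hondaLog_one, if_pos rfl, sub_self, mul_zero]
    | succ i =>
      have hn1 : p ^ (s * (i + 1)) ≠ 1 := (Nat.one_lt_pow (by positivity) hp.out.one_lt).ne'
      rw [mul_add_one, pow_add, if_pos (dvd_mul_left _ _), Nat.mul_div_cancel _ (by omega),
        ← pow_add, ← mul_add_one, if_neg hn1, sub_zero, coeff_hondaLog_pow hs,
        coeff_hondaLog_pow hs, Nat.cast_add_one, neg_add_rev, zpow_add₀ hp0, zpow_neg_one,
        mul_inv_cancel_left₀ hp0]
  · have hn1 : n ≠ 1 := fun h => hn ⟨0, by simp [h]⟩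
    rw [coeff_hondaLog_of_not_exists hn, if_neg hn1, sub_zero, mul_zero]
    split_ifs with hdvd
    · rw [coeff_hondaLog_of_not_exists]
      rintro ⟨i, hi⟩
      exact hn ⟨i + 1, by rw [← Nat.div_mul_cancel hdvd, hi, ← pow_add, mul_add_one]⟩
    · rfl

theorem norm_coeff_hondaLog_mul_lt_one {m : ℕ} (hm : m ≠ 1) {z : ℤ_[p]}
    (hz : ∀ j, m = p ^ j → (p : ℤ_[p]) ^ (j + 1) ∣ z) :
    ‖PowerSeries.coeff m (hondaLog p s) * z‖ < 1 := by
  by_cases h : ∃ i, m = p ^ (s * i)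
  · set i := Nat.find h
    have hi : m = p ^ (s * i) := Nat.find_spec h
    have hs : s ≠ 0 := by rintro rfl; exact hm (by simpa using hi)
    have hi_le : i ≤ s * i := Nat.le_mul_of_pos_left i (Nat.pos_of_ne_zero hs)
    obtain ⟨w, rfl⟩ := hz _ hi
    have hp0 : (p : ℚ_[p]) ≠ 0 := Nat.cast_ne_zero.2 hp.out.ne_zero
    have hval : PowerSeries.coeff m (hondaLog p s) * ((p ^ (s * i + 1) * w : ℤ_[p]) : ℚ_[p]) =
        ((p * (p ^ (s * i - i) * w) : ℤ_[p]) : ℚ_[p]) := by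
      rw [hondaLog, PowerSeries.coeff_mk, dif_pos h]
      push_cast
      rw [← mul_assoc, ← mul_assoc, ← zpow_natCast, ← zpow_natCast, ← zpow_add₀ hp0,
        ← zpow_one_add₀ hp0]
      congr 2
      push_cast [hi_le]
      ring
    rw [hval, PadicInt.padic_norm_e_of_padicInt, PadicInt.norm_lt_one_iff_dvd]
    exact dvd_mul_right _ _
  · rw [coeff_hondaLog_of_not_exists h, zero_mul, norm_zero]
    exact one_pos

local notation "ι" => PadicInt.Coe.ringHom (p := p)

theorem dvd_coeff_sub_of_norm_coeff_hondaLog_sub_lt_one {a b : PowerSeries ℤ_[p]}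
    (ha : PowerSeries.constantCoeff a = 0) (hb : PowerSeries.constantCoeff b = 0)
    (hab : ∀ n, ‖PowerSeries.coeff n ((hondaLog p s).subst (PowerSeries.map ι a) -
      (hondaLog p s).subst (PowerSeries.map ι b))‖ < 1) (n : ℕ) :
    (p : ℤ_[p]) ∣ PowerSeries.coeff n (a - b) := by
  induction n using Nat.strong_induction_on with
  | _ n ih =>
  rcases Nat.eq_zero_or_pos n with rfl | hn
  · simp [ha, hb]
  have hmap (c : PowerSeries ℤ_[p]) (hc : PowerSeries.constantCoeff c = 0) :
      PowerSeries.constantCoeff (PowerSeries.map ι c) = 0 := by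
    rw [← PowerSeries.coeff_zero_eq_constantCoeff_apply, PowerSeries.coeff_map,
      PowerSeries.coeff_zero_eq_constantCoeff_apply, hc, map_zero]
  have hsum := hab n
  rw [map_sub, PowerSeries.coeff_subst_eq_sum (hmap a ha),
    PowerSeries.coeff_subst_eq_sum (hmap b hb), ← Finset.sum_sub_distrib,
    ← Finset.add_sum_erase _ _ (Finset.mem_range.2 (by omega : 1 < n + 1))] at hsum
  simp only [← mul_sub, ← map_pow, PowerSeries.coeff_map, ← map_sub, pow_one,
    coeff_hondaLog_one, one_mul] at hsum
  let B : AddSubgroup ℚ_[p] := IsUltrametricDist.ball_openAddSubgroup ℚ_[p] one_pos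
  have hB (x : ℚ_[p]) : x ∈ B ↔ ‖x‖ < 1 := mem_ball_zero_iff
  have htail : ∑ m ∈ (Finset.range (n + 1)).erase 1, PowerSeries.coeff m (hondaLog p s) *
      ι (PowerSeries.coeff n (a ^ m - b ^ m)) ∈ B := by
    refine AddSubgroup.sum_mem _ fun m hm => (hB _).2 ?_
    refine norm_coeff_hondaLog_mul_lt_one (Finset.ne_of_mem_erase hm) fun j hj => ?_
    subst hj
    exact PowerSeries.dvd_coeff_pow_sub_pow hp.out.two_le ha hb ih
      (by rintro rfl; simp at hm)
  have := B.sub_mem ((hB _).2 hsum) htail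
  rw [add_sub_cancel_right, hB] at this
  exact (PadicInt.norm_lt_one_iff_dvd _).1 this

end HondaLog

/-- The `p`-series of the Honda formal group law of height `s` satisfies
`[p]_F(x) = x^(pˢ)`. -/
theorem honda_p_series (p : ℕ) [Fact p.Prime] (s : ℕ) (hs : 1 ≤ s)
    (F : MvPowerSeries (Fin 2) (ZMod p)) (hF : IsHondaFGL p s F) :
    kSeries F p = (PowerSeries.X : PowerSeries (ZMod p)) ^ (p ^ s) := by
  obtain ⟨F₀, hF₀, hlog, rfl⟩ := hF
  have hp : p.Prime := Fact.out
  set ι := PadicInt.Coe.ringHom (p := p)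
  have hF₀ι : constantCoeff (map ι F₀) = 0 := by rw [constantCoeff_map, hF₀, map_zero]
  rw [substPS_eq_subst hF₀ι, substPS_eq_subst (constantCoeff_X 0),
    substPS_eq_subst (constantCoeff_X 1)] at hlog
  set a := nSeries F₀ p
  set b : PowerSeries ℤ_[p] := PowerSeries.X ^ p ^ s
  have hla : (hondaLog p s).subst (PowerSeries.map ι a) = (p : ℚ_[p]) • hondaLog p s := by
    obtain ⟨k, hk⟩ := Nat.exists_eq_add_one_of_ne_zero hp.ne_zero
    have h := subst_nSeries_eq_nsmul hF₀ι hlog k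
    rw [← hk, ← Nat.cast_smul_eq_nsmul ℚ_[p]] at h
    rwa [map_nSeries ι hF₀]
  have hlb : (hondaLog p s).subst (PowerSeries.map ι b) =
      (p : ℚ_[p]) • (hondaLog p s - PowerSeries.X) := by
    rw [map_pow, PowerSeries.map_X]
    exact hondaLog_subst_X_pow hs
  have hb : PowerSeries.constantCoeff b = 0 := by simp [b, hp.ne_zero]
  have hdvd := dvd_coeff_sub_of_norm_coeff_hondaLog_sub_lt_one
    (constantCoeff_nSeries hF₀ p) hb fun n => by
      rw [hla, hlb, ← smul_sub, sub_sub_cancel, PowerSeries.coeff_smul, smul_eq_mul, norm_mul,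
        Padic.norm_p, PowerSeries.coeff_X]
      split_ifs <;> simp [inv_lt_one_of_one_lt₀, hp.one_lt]
  rw [kSeries_eq_nSeries (by rw [constantCoeff_map, hF₀, map_zero]), ← map_nSeries _ hF₀,
    PowerSeries.map_toZMod_eq_of_forall_dvd_coeff_sub hdvd, map_pow, PowerSeries.map_X]
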